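/- arXiv:2401.01805 — 2 statements merged into one kernel-verified Lean document; each statement's English description precedes it below -/
import Mathlib

section
/- Let r be the autocovariance function of a stationary Gaussian process, normalized so that r(0) = 1, twice continuously differentiable with r''(0) < 0. Fix t > 0 with |r(t)| < 1 and σ²(t) := 1 − r(t)² + r'(t)²/r''(0) > 0. Let R be a standard Rayleigh random variable (density x e^{-x²/2} on (0,∞)), let Z be a centered Gaussian random variable with variance σ²(t) independent of R, and let X_0(t) = −R · r'(t)/√(−r''(0)) + Z be the value of the Slepian model at time t. Then the expected value of the clipped Slepian model satisfies E[sgn(X_0(t))] = −(1/√(−r''(0))) · r'(t) / √(1 − r(t)²). -/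
/-! With `a = -r'(t)/√(-r''(0))` one has `a² + σ²(t) = 1 - r(t)²`, so it suffices to show
`E[sgn(aR + Z)] = a/√(a² + v)` for `R` Rayleigh and `Z ~ N(0, v)` independent. The symmetry of `Z`
makes the left side odd in `a`, so let `a > 0`. Since `aR + Z = 0` is a null event,
`E[sgn(aR + Z)] = 1 - 2 P(aR + Z < 0)`, and conditioning on `Z = z < 0` gives
`P(R < -z/a) = 1 - exp(-z²/(2a²))`; integrating this against the Gaussian density over the
half-line `z < 0` yields `1/2 - a/(2√(a² + v))`. -/

open MeasureTheory ProbabilityTheory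

/-! With `a = -r'(t)/√(-r''(0))` one has `a² + σ²(t) = 1 - r(t)²`, so it suffices to show
`E[sgn(aR + Z)] = a/√(a² + v)` for `R` Rayleigh and `Z ~ N(0, v)` independent. The symmetry of `Z`
makes the left side odd in `a`, so let `a > 0`. Since `aR + Z = 0` is a null event,
`E[sgn(aR + Z)] = 1 - 2 P(aR + Z < 0)`, and conditioning on `Z = z < 0` gives
`P(R < -z/a) = 1 - exp(-z²/(2a²))`; integrating this against the Gaussian density over the
half-line `z < 0` yields `1/2 - a/(2√(a² + v))`. -/

section Slepian

open Real Set Filter Topology NNReal ENNReal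

noncomputable def rayleighPDFReal (x : ℝ) : ℝ := if 0 < x then x * exp (-x ^ 2 / 2) else 0

noncomputable def rayleighReal : Measure ℝ :=
  volume.withDensity fun x => ENNReal.ofReal (rayleighPDFReal x)

lemma hasDerivAt_neg_exp_neg_sq_div_two (x : ℝ) :
    HasDerivAt (fun y => -exp (-y ^ 2 / 2)) (x * exp (-x ^ 2 / 2)) x := by
  have h : HasDerivAt (fun y : ℝ => -y ^ 2 / 2) (-x) x :=
    ((hasDerivAt_pow 2 x).neg.div_const 2).congr_deriv (by ring)
  exact h.exp.neg.congr_deriv (by ring)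

lemma tendsto_neg_exp_neg_sq_div_two_atTop :
    Tendsto (fun y : ℝ => -exp (-y ^ 2 / 2)) atTop (𝓝 0) := by
  simpa using (tendsto_exp_atBot.comp <| (tendsto_neg_atTop_atBot.comp
    (tendsto_pow_atTop two_ne_zero)).atBot_div_const two_pos).neg

lemma continuous_neg_exp_neg_sq_div_two : Continuous fun y : ℝ => -exp (-y ^ 2 / 2) := by
  fun_prop

lemma integrableOn_Ioi_mul_exp_neg_sq_div_two :
    IntegrableOn (fun x : ℝ => x * exp (-x ^ 2 / 2)) (Ioi 0) :=
  integrableOn_Ioi_deriv_of_nonneg continuous_neg_exp_neg_sq_div_two.continuousWithinAt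
    (fun x _ => hasDerivAt_neg_exp_neg_sq_div_two x)
    (fun _ hx => mul_nonneg (le_of_lt hx) (exp_pos _).le) tendsto_neg_exp_neg_sq_div_two_atTop

lemma integral_Ioi_mul_exp_neg_sq_div_two : ∫ x in Ioi 0, x * exp (-x ^ 2 / 2) = 1 := by
  rw [integral_Ioi_of_hasDerivAt_of_nonneg continuous_neg_exp_neg_sq_div_two.continuousWithinAt
    (fun x _ => hasDerivAt_neg_exp_neg_sq_div_two x)
    (fun _ hx => mul_nonneg (le_of_lt hx) (exp_pos _).le) tendsto_neg_exp_neg_sq_div_two_atTop]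
  simp

lemma integral_Ioo_mul_exp_neg_sq_div_two {u : ℝ} (hu : 0 ≤ u) :
    ∫ x in Ioo 0 u, x * exp (-x ^ 2 / 2) = 1 - exp (-u ^ 2 / 2) := by
  rw [← integral_Ioc_eq_integral_Ioo, ← intervalIntegral.integral_of_le hu,
    intervalIntegral.integral_eq_sub_of_hasDerivAt (fun x _ => hasDerivAt_neg_exp_neg_sq_div_two x)
      (Continuous.intervalIntegrable (by fun_prop) _ _)]
  simp only [ne_eq, OfNat.ofNat_ne_zero, not_false_eq_true, zero_pow, neg_zero, zero_div, exp_zero]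
  ring

lemma rayleighReal_apply {s : Set ℝ} (hs : MeasurableSet s) :
    rayleighReal s = ENNReal.ofReal (∫ x in Ioi 0 ∩ s, x * exp (-x ^ 2 / 2)) := by
  have hind : (fun x => ENNReal.ofReal (rayleighPDFReal x))
      = (Ioi 0).indicator fun x => ENNReal.ofReal (x * exp (-x ^ 2 / 2)) := by
    ext x
    by_cases hx : 0 < x <;> simp [rayleighPDFReal, hx]
  rw [rayleighReal, withDensity_apply _ hs, hind, lintegral_indicator measurableSet_Ioi,
    Measure.restrict_restrict measurableSet_Ioi, ofReal_integral_eq_lintegral_ofReal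
      (integrableOn_Ioi_mul_exp_neg_sq_div_two.mono_set inter_subset_left)]
  exact (ae_restrict_iff' (measurableSet_Ioi.inter hs)).2 <| ae_of_all _ fun x hx =>
    mul_nonneg (le_of_lt hx.1) (exp_pos _).le

instance : IsProbabilityMeasure rayleighReal :=
  ⟨by rw [rayleighReal_apply MeasurableSet.univ, inter_univ, integral_Ioi_mul_exp_neg_sq_div_two,
    ENNReal.ofReal_one]⟩

instance : NullSingletonClass rayleighReal := by
  unfold rayleighReal
  infer_instance

lemma rayleighReal_Iio_of_nonpos {u : ℝ} (hu : u ≤ 0) : rayleighReal (Iio u) = 0 := by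
  rw [rayleighReal_apply measurableSet_Iio, Ioi_inter_Iio, Ioo_eq_empty (by linarith)]
  simp

lemma rayleighReal_Iio_of_nonneg {u : ℝ} (hu : 0 ≤ u) :
    rayleighReal (Iio u) = ENNReal.ofReal (1 - exp (-u ^ 2 / 2)) := by
  rw [rayleighReal_apply measurableSet_Iio, Ioi_inter_Iio, integral_Ioo_mul_exp_neg_sq_div_two hu]

lemma integral_Iio_exp_neg_mul_sq (b : ℝ) : ∫ x in Iio 0, exp (-b * x ^ 2) = √(π / b) / 2 := by
  rw [← integral_Iic_eq_integral_Iio, ← neg_zero, ← integral_comp_neg_Ioi]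
  simpa using integral_gaussian_Ioi b

lemma setIntegral_Iio_exp_neg_mul_sq_gaussianReal {v : ℝ≥0} (hv : v ≠ 0) {k : ℝ} (hk : 0 ≤ k) :
    ∫ z in Iio 0, exp (-k * z ^ 2) ∂gaussianReal 0 v = 1 / (2 * √(1 + 2 * k * v)) := by
  have hpdf (z : ℝ) : gaussianPDFReal 0 v z * exp (-k * z ^ 2)
      = (√(2 * π * v))⁻¹ * exp (-(1 / (2 * v) + k) * z ^ 2) := by
    rw [gaussianPDFReal, mul_assoc, ← exp_add]
    congr 2
    field_simp
    ring
  calc ∫ z in Iio 0, exp (-k * z ^ 2) ∂gaussianReal 0 v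
      = ∫ z in Iio 0, gaussianPDFReal 0 v z * exp (-k * z ^ 2) := by
        rw [← integral_indicator measurableSet_Iio, integral_gaussianReal_eq_integral_smul hv,
          ← integral_indicator measurableSet_Iio]
        simp_rw [indicator_mul_right, smul_eq_mul]
    _ = (√(2 * π * v))⁻¹ * (√(π / (1 / (2 * v) + k)) / 2) := by
        simp_rw [hpdf]
        rw [integral_const_mul, integral_Iio_exp_neg_mul_sq]
    _ = 1 / (2 * √(1 + 2 * k * v)) := by
        rw [show π / (1 / (2 * v) + k) = 2 * π * v / (1 + 2 * k * v) by field_simp,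
          sqrt_div' _ (by positivity)]
        have : 0 < √(2 * π * v) := by positivity
        field_simp

lemma Real.measurable_sign : Measurable Real.sign := by
  unfold Real.sign
  exact Measurable.ite measurableSet_Iio measurable_const
    (Measurable.ite measurableSet_Ioi measurable_const measurable_const)

lemma measurable_sign_mul_add (a : ℝ) : Measurable fun p : ℝ × ℝ => Real.sign (a * p.1 + p.2) :=
  Real.measurable_sign.comp (by fun_prop)

lemma integral_sign_eq_one_sub_two_mul_measureReal {Ω : Type*} [MeasurableSpace Ω]
    {μ : Measure Ω} [IsProbabilityMeasure μ] {f : Ω → ℝ} (hf : Measurable f)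
    (h0 : μ {x | f x = 0} = 0) :
    ∫ x, Real.sign (f x) ∂μ = 1 - 2 * μ.real {x | f x < 0} := by
  have hneg : MeasurableSet {x | f x < 0} := measurableSet_lt hf measurable_const
  have hae : (fun x => Real.sign (f x)) =ᵐ[μ] fun x => 1 - 2 * {x | f x < 0}.indicator 1 x := by
    filter_upwards [(ae_iff.2 (by simpa using h0) : ∀ᵐ x ∂μ, f x ≠ 0)] with x hx
    rcases hx.lt_or_gt with h | h
    · norm_num [Real.sign_of_neg h, h]
    · simp [Real.sign_of_pos h, h.not_gt]
  rw [integral_congr_ae hae, integral_sub (integrable_const _)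
    (((integrable_const 1).indicator hneg).const_mul 2), integral_const_mul,
    integral_indicator_one hneg]
  simp

lemma prod_setOf_mul_add_eq_zero (μ ν : Measure ℝ) [SFinite μ] [SFinite ν] [NullSingletonClass μ]
    {a : ℝ} (ha : a ≠ 0) : μ.prod ν {p | a * p.1 + p.2 = 0} = 0 := by
  have hslice (z : ℝ) : (fun x => (x, z)) ⁻¹' {p : ℝ × ℝ | a * p.1 + p.2 = 0} = {-z / a} := by
    ext x
    simp only [mem_preimage, mem_ofPred_eq, mem_singleton_iff, eq_div_iff ha]
    constructor <;> intro h <;> linarith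
  rw [Measure.prod_apply_symm (measurableSet_eq_fun (by fun_prop) measurable_const)]
  simp [hslice]

lemma integral_sign_neg_mul_add_prod_gaussianReal (μ : Measure ℝ) [SFinite μ] (v : ℝ≥0) (a : ℝ) :
    ∫ p, Real.sign (-a * p.1 + p.2) ∂(μ.prod (gaussianReal 0 v))
      = -∫ p, Real.sign (a * p.1 + p.2) ∂(μ.prod (gaussianReal 0 v)) := by
  have hsymm : (μ.prod (gaussianReal 0 v)).map (Prod.map id Neg.neg) = μ.prod (gaussianReal 0 v) := by
    rw [← Measure.map_prod_map _ _ measurable_id measurable_neg, Measure.map_id,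
      gaussianReal_map_neg, neg_zero]
  conv_lhs => rw [← hsymm]
  rw [integral_map (by fun_prop)
      (measurable_sign_mul_add (-a)).aestronglyMeasurable, ← integral_neg]
  congr with p
  rw [← Real.sign_neg]
  simp only [Prod.map, id, neg_add, neg_mul]

lemma rayleighReal_setOf_mul_add_neg {a : ℝ} (ha : 0 < a) (z : ℝ) :
    rayleighReal {x | a * x + z < 0}
      = (Iio 0).indicator (fun z => ENNReal.ofReal (1 - exp (-(1 / (2 * a ^ 2)) * z ^ 2))) z := by
  have hset : {x | a * x + z < 0} = Iio (-z / a) := by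
    ext x
    rw [mem_ofPred_eq, mem_Iio, lt_div_iff₀ ha]
    constructor <;> intro h <;> linarith
  rcases lt_or_ge z 0 with hz | hz
  · rw [hset, rayleighReal_Iio_of_nonneg (div_nonneg (by linarith) ha.le),
      indicator_of_mem (mem_Iio.2 hz)]
    congr 3
    field_simp
  · rw [hset, rayleighReal_Iio_of_nonpos (div_nonpos_of_nonpos_of_nonneg (by linarith) ha.le),
      indicator_of_notMem (by simpa using hz)]

lemma rayleighReal_prod_gaussianReal_setOf_mul_add_neg {v : ℝ≥0} (hv : v ≠ 0) {a : ℝ}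
    (ha : 0 < a) :
    rayleighReal.prod (gaussianReal 0 v) {p | a * p.1 + p.2 < 0}
      = ENNReal.ofReal (1 / 2 - a / (2 * √(a ^ 2 + v))) := by
  rw [Measure.prod_apply_symm (measurableSet_lt (by fun_prop) measurable_const)]
  simp_rw [preimage_ofPred_eq, rayleighReal_setOf_mul_add_neg ha]
  set k := 1 / (2 * a ^ 2)
  have hk : 0 ≤ k := by positivity
  have hexp_le (z : ℝ) : exp (-k * z ^ 2) ≤ 1 := exp_le_one_iff.2 (by nlinarith [sq_nonneg z])
  have hexp_int : Integrable (fun z => exp (-k * z ^ 2)) (gaussianReal 0 v) :=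
    Integrable.of_bound (by fun_prop) 1 (ae_of_all _ fun z => by
      rw [norm_of_nonneg (exp_pos _).le]; exact hexp_le z)
  have hint : Integrable (fun z => 1 - exp (-k * z ^ 2)) (gaussianReal 0 v) :=
    (integrable_const 1).sub hexp_int
  have hhalf : (gaussianReal 0 v).real (Iio 0) = 1 / 2 := by
    simpa using setIntegral_Iio_exp_neg_mul_sq_gaussianReal hv le_rfl
  rw [lintegral_indicator measurableSet_Iio, ← ofReal_integral_eq_lintegral_ofReal
      hint.integrableOn (ae_of_all _ fun z => sub_nonneg.2 (hexp_le z)),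
    integral_sub (integrable_const 1).integrableOn hexp_int.integrableOn,
    setIntegral_const, smul_eq_mul, mul_one, setIntegral_Iio_exp_neg_mul_sq_gaussianReal hv hk,
    hhalf]
  have hsqrt : √(1 + 2 * k * v) = √(a ^ 2 + v) / a := by
    rw [show 1 + 2 * k * v = (a ^ 2 + v) / a ^ 2 by simp only [k]; field_simp,
      sqrt_div' _ (sq_nonneg a), sqrt_sq ha.le]
  rw [hsqrt]
  field_simp

lemma integral_sign_mul_add_rayleighReal_prod_gaussianReal_of_pos {v : ℝ≥0} (hv : v ≠ 0)
    {a : ℝ} (ha : 0 < a) :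
    ∫ p, Real.sign (a * p.1 + p.2) ∂(rayleighReal.prod (gaussianReal 0 v)) = a / √(a ^ 2 + v) := by
  have ha_le : a ≤ √(a ^ 2 + v) := le_sqrt_of_sq_le (by simp)
  rw [integral_sign_eq_one_sub_two_mul_measureReal (by fun_prop)
      (prod_setOf_mul_add_eq_zero _ _ ha.ne'), measureReal_def,
    rayleighReal_prod_gaussianReal_setOf_mul_add_neg hv ha, ENNReal.toReal_ofReal]
  · field_simp
    ring
  · rw [sub_nonneg, div_le_div_iff₀ (by positivity) two_pos]
    linarith

lemma integral_sign_mul_add_rayleighReal_prod_gaussianReal {v : ℝ≥0} (hv : v ≠ 0) (a : ℝ) :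
    ∫ p, Real.sign (a * p.1 + p.2) ∂(rayleighReal.prod (gaussianReal 0 v)) = a / √(a ^ 2 + v) := by
  rcases lt_trichotomy a 0 with ha | rfl | ha
  · have h := integral_sign_neg_mul_add_prod_gaussianReal rayleighReal v a
    rw [integral_sign_mul_add_rayleighReal_prod_gaussianReal_of_pos hv (neg_pos.2 ha), neg_sq,
      neg_div] at h
    linarith
  · have h := integral_sign_neg_mul_add_prod_gaussianReal rayleighReal v 0
    rw [neg_zero] at h
    rw [zero_div]
    linarith
  · exact integral_sign_mul_add_rayleighReal_prod_gaussianReal_of_pos hv ha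

lemma integral_sign_mul_add_of_indepFun {Ω : Type*} [MeasureSpace Ω]
    [IsFiniteMeasure (ℙ : Measure Ω)]
    {R Z : Ω → ℝ} (hR : Measurable R) (hZ : Measurable Z) (hindep : IndepFun R Z ℙ)
    (hRlaw : Measure.map R ℙ = rayleighReal) {v : ℝ≥0} (hv : v ≠ 0)
    (hZlaw : Measure.map Z ℙ = gaussianReal 0 v) (a : ℝ) :
    ∫ ω, Real.sign (a * R ω + Z ω) ∂ℙ = a / √(a ^ 2 + v) := by
  have hjoint : Measure.map (fun ω => (R ω, Z ω)) ℙ = rayleighReal.prod (gaussianReal 0 v) := by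
    rw [(indepFun_iff_map_prod_eq_prod_map_map hR.aemeasurable hZ.aemeasurable).1 hindep,
      hRlaw, hZlaw]
  rw [← integral_sign_mul_add_rayleighReal_prod_gaussianReal hv a, ← hjoint,
    integral_map (hR.prodMk hZ).aemeasurable (measurable_sign_mul_add a).aestronglyMeasurable]

end Slepian

theorem stmt_7_general
    {Ω : Type*} [MeasureSpace Ω] [IsProbabilityMeasure (ℙ : Measure Ω)]
    (r : ℝ → ℝ) (t σ2 : ℝ) (R Z X₀ : Ω → ℝ)
    (hr'' : deriv (deriv r) 0 < 0)
    (hσ2 : σ2 = 1 - r t ^ 2 + (deriv r t) ^ 2 / deriv (deriv r) 0)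
    (hσ2pos : 0 < σ2)
    (hRmeas : Measurable R) (hZmeas : Measurable Z)
    (hRlaw : Measure.map R ℙ = volume.withDensity
      (fun x => ENNReal.ofReal (if 0 < x then x * Real.exp (-x ^ 2 / 2) else 0)))
    (hZlaw : Measure.map Z ℙ = gaussianReal 0 (Real.toNNReal σ2))
    (hindep : IndepFun R Z ℙ)
    (hX : ∀ ω, X₀ ω = -R ω * (deriv r t / Real.sqrt (-(deriv (deriv r) 0))) + Z ω) :
    ∫ ω, Real.sign (X₀ ω) ∂ℙ
      = -(1 / Real.sqrt (-(deriv (deriv r) 0)))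
          * (deriv r t / Real.sqrt (1 - r t ^ 2)) := by
  set s := √(-deriv (deriv r) 0)
  have hs : s ^ 2 = -deriv (deriv r) 0 := Real.sq_sqrt (by linarith)
  have hvar : (Real.toNNReal σ2 : ℝ) = σ2 := Real.coe_toNNReal _ hσ2pos.le
  have hsum : (-(deriv r t / s)) ^ 2 + σ2 = 1 - r t ^ 2 := by
    rw [hσ2, neg_sq, div_pow, hs]
    ring
  simp_rw [hX, show ∀ ω, -R ω * (deriv r t / s) + Z ω = -(deriv r t / s) * R ω + Z ω from
    fun ω => by ring]
  rw [integral_sign_mul_add_of_indepFun hRmeas hZmeas hindep hRlaw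
    (Real.toNNReal_pos.2 hσ2pos).ne' hZlaw, hvar, hsum]
  ring

/-- The expectation of the clipped Slepian model at a fixed time `t`:
if `X₀(t) = −R·r'(t)/√(−r''(0)) + Z` with `R` standard Rayleigh and `Z` an independent
centered Gaussian with variance `σ²(t) = 1 − r(t)² + r'(t)²/r''(0) > 0`, then
`𝔼[sgn(X₀(t))] = −(1/√(−r''(0)))·r'(t)/√(1 − r(t)²)`. -/
theorem stmt_7
    {Ω : Type*} [MeasureSpace Ω] [IsProbabilityMeasure (ℙ : Measure Ω)]
    (r : ℝ → ℝ) (t σ2 : ℝ) (R Z X₀ : Ω → ℝ)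
    (hr : ContDiff ℝ 2 r) (hr0 : r 0 = 1) (hr'' : deriv (deriv r) 0 < 0)
    (ht : 0 < t) (hrt : |r t| < 1)
    (hσ2 : σ2 = 1 - r t ^ 2 + (deriv r t) ^ 2 / deriv (deriv r) 0)
    (hσ2pos : 0 < σ2)
    (hRmeas : Measurable R) (hZmeas : Measurable Z)
    (hRlaw : Measure.map R ℙ = volume.withDensity
      (fun x => ENNReal.ofReal (if 0 < x then x * Real.exp (-x ^ 2 / 2) else 0)))
    (hZlaw : Measure.map Z ℙ = gaussianReal 0 (Real.toNNReal σ2))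
    (hindep : IndepFun R Z ℙ)
    (hX : ∀ ω, X₀ ω = -R ω * (deriv r t / Real.sqrt (-(deriv (deriv r) 0))) + Z ω) :
    ∫ ω, Real.sign (X₀ ω) ∂ℙ
      = -(1 / Real.sqrt (-(deriv (deriv r) 0)))
          * (deriv r t / Real.sqrt (1 - r t ^ 2)) :=
  stmt_7_general r t σ2 R Z X₀ hr'' hσ2 hσ2pos hRmeas hZmeas hRlaw hZlaw hindep hX
end

section
/- Let (T̃_i)_{i≥1} be i.i.d. nonnegative random variables with P(T̃_1 > τ) ≤ e^{-bτ} for all τ > 0 and some b > 0, let ν be independent of (T̃_i) with geometric distribution P(ν = k) = 2^{-k} for k = 1, 2, ..., and let T_a = Σ_{i=1}^{ν} T̃_i. Then P(T_a > τ) ≤ e^{-bτ/2} for all τ > 0. -/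
/-!
Each `T̃ᵢ` is stochastically dominated by an `Exp(b)` variable, and this domination survives
independent sums: by the layer-cake formula, if `P(X > t) ≤ G_k(t)` then
`P(X + Y > τ) ≤ e^{-bτ} + ∫₀^τ G_k(s) b e^{-b(τ-s)} ds = G_{k+1}(τ)`, where `G_k` is the
Erlang(k, b) tail. Conditioning on the independent `ν` then gives
`P(T_a > τ) ≤ ∑ₖ 2⁻ᵏ G_k(τ) = e^{-bτ/2}`: a geometric sum of `Exp(b)` variables is `Exp(b/2)`.
-/

open MeasureTheory ProbabilityTheory Set
open scoped ENNReal

/-- The Erlang tail `P(E₁ + ⋯ + E_k > τ)` for i.i.d. `Eᵢ ∼ Exp(b)`. -/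
noncomputable def erlangTail (b : ℝ) (k : ℕ) (τ : ℝ) : ℝ :=
  Real.exp (-b * τ) * ∑ j ∈ Finset.range k, (b * τ) ^ j / j.factorial

lemma erlangTail_nonneg {b τ : ℝ} (hb : 0 ≤ b) (hτ : 0 ≤ τ) (k : ℕ) : 0 ≤ erlangTail b k τ := by
  unfold erlangTail; positivity

@[fun_prop]
lemma continuous_erlangTail (b : ℝ) (k : ℕ) : Continuous (erlangTail b k) := by
  unfold erlangTail; fun_prop

lemma integral_mul_pow_div_factorial (b τ : ℝ) (j : ℕ) :
    ∫ s in 0..τ, b * (b * s) ^ j / j.factorial = (b * τ) ^ (j + 1) / (j + 1).factorial := by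
  have hderiv (s : ℝ) : HasDerivAt (fun s => (b * s) ^ (j + 1) / (j + 1).factorial)
      (b * (b * s) ^ j / j.factorial) s := by
    refine ((((hasDerivAt_id s).const_mul b).pow (j + 1)).div_const _).congr_deriv ?_
    rw [Nat.factorial_succ]; push_cast; field_simp; simp
  rw [intervalIntegral.integral_eq_sub_of_hasDerivAt (fun s _ => hderiv s)
    (Continuous.intervalIntegrable (by fun_prop) _ _)]
  simp

lemma erlangTail_succ (b τ : ℝ) (k : ℕ) :
    erlangTail b (k + 1) τ =
      Real.exp (-b * τ) + ∫ s in 0..τ, erlangTail b k s * (b * Real.exp (-b * (τ - s))) := by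
  have hintegrand : (fun s => erlangTail b k s * (b * Real.exp (-b * (τ - s)))) =
      fun s => Real.exp (-b * τ) * ∑ j ∈ Finset.range k, b * (b * s) ^ j / j.factorial := by
    ext s
    rw [erlangTail, Finset.mul_sum, Finset.mul_sum, Finset.sum_mul]
    refine Finset.sum_congr rfl fun j _ => ?_
    rw [show -b * τ = -b * s + -b * (τ - s) by ring, Real.exp_add]; ring
  rw [hintegrand, intervalIntegral.integral_const_mul,
    intervalIntegral.integral_finsetSum fun j _ => Continuous.intervalIntegrable (by fun_prop) _ _]
  simp only [integral_mul_pow_div_factorial, erlangTail, Finset.sum_range_succ']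
  simp only [neg_mul, pow_zero, Nat.factorial_zero, Nat.cast_one, ne_eq, one_ne_zero,
    not_false_eq_true, div_self]
  ring

lemma exp_eq_add_integral (b τ c : ℝ) :
    Real.exp (-b * (τ - c)) = Real.exp (-b * τ) + ∫ s in 0..c, b * Real.exp (-b * (τ - s)) := by
  have hderiv (s : ℝ) :
      HasDerivAt (fun s => Real.exp (-b * (τ - s))) (b * Real.exp (-b * (τ - s))) s := by
    refine (((hasDerivAt_id s).const_sub τ).const_mul (-b)).exp.congr_deriv ?_
    simp only [id_eq, neg_mul, mul_neg, mul_one, neg_neg]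
    ring
  rw [intervalIntegral.integral_eq_sub_of_hasDerivAt (fun s _ => hderiv s)
    (Continuous.intervalIntegrable (by fun_prop) _ _)]
  simp

lemma lintegral_exp_clamp_le {μ : Measure ℝ} [IsProbabilityMeasure μ] {b τ : ℝ} (hb : 0 < b)
    (hτ : 0 < τ) {k : ℕ} (hμ : ∀ t > 0, μ (Ioi t) ≤ ENNReal.ofReal (erlangTail b k t)) :
    ∫⁻ x, ENNReal.ofReal (Real.exp (-b * (τ - max (min x τ) 0))) ∂μ
      ≤ ENNReal.ofReal (erlangTail b (k + 1) τ) := by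
  set g : ℝ → ℝ := fun s => b * Real.exp (-b * (τ - s))
  have hg_nonneg (s : ℝ) : 0 ≤ g s := by positivity
  have hGg_nonneg {t : ℝ} (ht : 0 ≤ t) : 0 ≤ erlangTail b k t * g t :=
    mul_nonneg (erlangTail_nonneg hb.le ht k) (hg_nonneg t)
  have hlayer (t : ℝ) (ht : 0 < t) : μ {x | t < max (min x τ) 0} * ENNReal.ofReal (g t)
      ≤ (Iic τ).indicator (fun t => ENNReal.ofReal (erlangTail b k t * g t)) t := by
    by_cases htτ : t ≤ τ
    · have hsub : {x | t < max (min x τ) 0} ⊆ Ioi t := fun x hx => by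
        simp only [mem_ofPred_eq, lt_max_iff, lt_min_iff] at hx
        exact hx.elim And.left fun h => absurd h (not_lt.mpr ht.le)
      rw [indicator_of_mem (mem_Iic.mpr htτ),
        ENNReal.ofReal_mul (erlangTail_nonneg hb.le ht.le k)]
      gcongr
      exact (measure_mono hsub).trans (hμ t ht)
    · have hempty : {x | t < max (min x τ) 0} = ∅ := by
        ext x; simp only [mem_ofPred_eq, mem_empty_iff_false, iff_false, not_lt]
        exact max_le ((min_le_right _ _).trans (le_of_not_ge htτ)) ht.le
      rw [hempty]; simp
  calc ∫⁻ x, ENNReal.ofReal (Real.exp (-b * (τ - max (min x τ) 0))) ∂μ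
      = ∫⁻ x, ENNReal.ofReal (Real.exp (-b * τ))
          + ENNReal.ofReal (∫ s in 0..max (min x τ) 0, g s) ∂μ := by
        refine lintegral_congr fun x => ?_
        rw [exp_eq_add_integral, ENNReal.ofReal_add (Real.exp_pos _).le
          (intervalIntegral.integral_nonneg (le_max_right _ _) fun s _ => hg_nonneg s)]
    _ = ENNReal.ofReal (Real.exp (-b * τ))
          + ∫⁻ t in Ioi 0, μ {x | t < max (min x τ) 0} * ENNReal.ofReal (g t) := by
        rw [lintegral_add_left measurable_const, lintegral_const, measure_univ, mul_one,
          lintegral_comp_eq_lintegral_meas_lt_mul μ (f := fun x => max (min x τ) 0)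
            (Filter.Eventually.of_forall fun x => le_max_right _ _) (by fun_prop)
            (fun t _ => Continuous.intervalIntegrable (by fun_prop) _ _)
            (Filter.Eventually.of_forall hg_nonneg)]
    _ ≤ ENNReal.ofReal (Real.exp (-b * τ))
          + ∫⁻ t in Ioc 0 τ, ENNReal.ofReal (erlangTail b k t * g t) := by
        have hmeas_bound : Measurable ((Iic τ).indicator
            fun t => ENNReal.ofReal (erlangTail b k t * g t)) :=
          (ENNReal.measurable_ofReal.comp ((continuous_erlangTail b k).mul
            (by fun_prop)).measurable).indicator measurableSet_Iic
        refine add_le_add le_rfl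
          ((setLIntegral_mono (s := Ioi 0) hmeas_bound fun t ht => hlayer t ht).trans_eq ?_)
        rw [lintegral_indicator measurableSet_Iic, Measure.restrict_restrict measurableSet_Iic,
          Iic_inter_Ioi]
    _ = ENNReal.ofReal (erlangTail b (k + 1) τ) := by
        rw [← ofReal_integral_eq_lintegral_ofReal, ← intervalIntegral.integral_of_le hτ.le,
          ← ENNReal.ofReal_add (Real.exp_pos _).le, erlangTail_succ]
        · exact intervalIntegral.integral_nonneg hτ.le fun t ht => hGg_nonneg ht.1
        · exact (((continuous_erlangTail b k).mul (by fun_prop)).integrableOn_Icc).mono_set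
            Ioc_subset_Icc_self
        · exact (ae_restrict_iff' measurableSet_Ioc).mpr
            (Filter.Eventually.of_forall fun t ht => hGg_nonneg ht.1.le)

lemma conv_Ioi_le_erlangTail_succ {μ ν : Measure ℝ} [IsProbabilityMeasure μ]
    [IsProbabilityMeasure ν] {b : ℝ} (hb : 0 < b) {k : ℕ}
    (hμ : ∀ t > 0, μ (Ioi t) ≤ ENNReal.ofReal (erlangTail b k t))
    (hν : ∀ t > 0, ν (Ioi t) ≤ ENNReal.ofReal (Real.exp (-b * t))) {τ : ℝ} (hτ : 0 < τ) :
    (μ ∗ ν) (Ioi τ) ≤ ENNReal.ofReal (erlangTail b (k + 1) τ) := by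
  rw [Measure.conv, Measure.map_apply measurable_add measurableSet_Ioi,
    Measure.prod_apply (measurable_add measurableSet_Ioi)]
  -- Clamping `x` to `[0, τ]` only enlarges the bound, and makes the layer-cake formula apply.
  refine (lintegral_mono fun x => ?_).trans (lintegral_exp_clamp_le hb hτ hμ)
  have hslice : Prod.mk x ⁻¹' ((fun p : ℝ × ℝ => p.1 + p.2) ⁻¹' Ioi τ) = Ioi (τ - x) := by
    ext y; simp [sub_lt_iff_lt_add']
  rw [hslice]
  rcases le_or_gt τ x with hx | hx
  · simp [min_eq_right hx, hτ.le, prob_le_one]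
  · refine (hν _ (sub_pos.2 hx)).trans (ENNReal.ofReal_le_ofReal (Real.exp_le_exp.2 ?_))
    nlinarith [le_max_left (min x τ) 0, min_eq_left hx.le]

lemma map_sum_range_Ioi_le_erlangTail {Ω : Type*} [MeasurableSpace Ω] {μ : Measure Ω}
    [IsProbabilityMeasure μ] {X : ℕ → Ω → ℝ} (hmeas : ∀ i, Measurable (X i))
    (hindep : iIndepFun X μ) {b : ℝ} (hb : 0 < b)
    (htail : ∀ i, ∀ t > 0, μ.map (X i) (Ioi t) ≤ ENNReal.ofReal (Real.exp (-b * t))) (k : ℕ)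
    {τ : ℝ} (hτ : 0 < τ) :
    μ.map (∑ i ∈ Finset.range k, X i) (Ioi τ) ≤ ENNReal.ofReal (erlangTail b k τ) := by
  induction k generalizing τ with
  | zero =>
    simp [Measure.map_apply measurable_zero measurableSet_Ioi, preimage, hτ.not_gt, erlangTail]
  | succ k ih =>
    have hsum : Measurable (∑ i ∈ Finset.range k, X i) := by
      rw [Finset.sum_fn]; exact Finset.measurable_sum _ fun i _ => hmeas i
    have := Measure.isProbabilityMeasure_map (μ := μ) hsum.aemeasurable
    have := Measure.isProbabilityMeasure_map (μ := μ) (hmeas k).aemeasurable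
    rw [Finset.sum_range_succ,
      (hindep.indepFun_sum_range_succ hmeas k).map_add_eq_map_conv_map hsum (hmeas k)]
    exact conv_Ioi_le_erlangTail_succ hb (fun t ht => ih ht) (htail k) hτ

lemma ofReal_exp_eq_tsum {x : ℝ} (hx : 0 ≤ x) :
    ENNReal.ofReal (Real.exp x) = ∑' j : ℕ, ENNReal.ofReal (x ^ j / j.factorial) := by
  rw [← ENNReal.ofReal_tsum_of_nonneg (fun j => by positivity)
    (Real.summable_pow_div_factorial x), Real.exp_eq_exp_ℝ, NormedSpace.exp_eq_tsum_div]

lemma ofReal_inv_two_pow (k : ℕ) : ENNReal.ofReal (2⁻¹ ^ k) = 2⁻¹ ^ k := by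
  rw [ENNReal.ofReal_pow (by norm_num), ENNReal.ofReal_inv_of_pos two_pos, ENNReal.ofReal_ofNat]

lemma tsum_inv_two_pow_ite_lt (j : ℕ) :
    ∑' k : ℕ, (if j < k then (2⁻¹ : ℝ≥0∞) ^ k else 0) = 2⁻¹ ^ j := by
  rw [← ENNReal.summable.sum_add_tsum_nat_add' (k := j + 1),
    Finset.sum_eq_zero fun k hk => if_neg (by simp at hk; omega), zero_add]
  have hlt : ∀ m, j < m + (j + 1) := by omega
  simp only [hlt, if_true, pow_add, ENNReal.tsum_mul_right, ENNReal.tsum_geometric,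
    ENNReal.one_sub_inv_two, inv_inv, pow_one]
  rw [mul_left_comm, ENNReal.mul_inv_cancel two_ne_zero ENNReal.ofNat_ne_top, mul_one]

lemma tsum_inv_two_pow_mul_erlangTail {b τ : ℝ} (hb : 0 ≤ b) (hτ : 0 ≤ τ) :
    ∑' k : ℕ, (2⁻¹ : ℝ≥0∞) ^ k * ENNReal.ofReal (erlangTail b k τ)
      = ENNReal.ofReal (Real.exp (-b * τ / 2)) := by
  set d : ℕ → ℝ≥0∞ := fun j => ENNReal.ofReal (Real.exp (-b * τ) * ((b * τ) ^ j / j.factorial))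
  have hd (k : ℕ) : ENNReal.ofReal (erlangTail b k τ) = ∑' j, if j < k then d j else 0 := by
    rw [erlangTail, Finset.mul_sum, ENNReal.ofReal_sum_of_nonneg fun j _ => by positivity,
      tsum_eq_sum (s := Finset.range k) fun j hj => if_neg (by simpa using hj)]
    exact Finset.sum_congr rfl fun j hj => (if_pos (Finset.mem_range.mp hj)).symm
  calc ∑' k : ℕ, (2⁻¹ : ℝ≥0∞) ^ k * ENNReal.ofReal (erlangTail b k τ)
      = ∑' j, ∑' k, (if j < k then (2⁻¹ : ℝ≥0∞) ^ k else 0) * d j := by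
        simp_rw [hd, ← ENNReal.tsum_mul_left, ite_mul, zero_mul, mul_ite, mul_zero]
        exact ENNReal.tsum_comm
    _ = ∑' j, ENNReal.ofReal (Real.exp (-b * τ))
          * ENNReal.ofReal ((b * τ / 2) ^ j / j.factorial) := by
        refine tsum_congr fun j => ?_
        rw [ENNReal.tsum_mul_right, tsum_inv_two_pow_ite_lt, ← ofReal_inv_two_pow,
          ← ENNReal.ofReal_mul (by positivity), ← ENNReal.ofReal_mul (Real.exp_pos _).le]
        congr 1; ring
    _ = ENNReal.ofReal (Real.exp (-b * τ / 2)) := by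
        rw [ENNReal.tsum_mul_left, ← ofReal_exp_eq_tsum (by positivity),
          ← ENNReal.ofReal_mul (Real.exp_pos _).le, ← Real.exp_add]
        ring_nf

lemma measure_lt_sum_range_eq_tsum {Ω : Type*} [MeasurableSpace Ω] {μ : Measure Ω}
    {X : ℕ → Ω → ℝ} {N : Ω → ℕ} (hmeas : ∀ i, Measurable (X i)) (hN : Measurable N)
    (hindep : IndepFun N (fun ω i => X i ω) μ) (τ : ℝ) :
    μ {ω | τ < ∑ i ∈ Finset.range (N ω), X i ω}
      = ∑' k, μ {ω | N ω = k} * μ {ω | τ < ∑ i ∈ Finset.range k, X i ω} := by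
  set B : ℕ → Set (ℕ → ℝ) := fun k => {f | τ < ∑ i ∈ Finset.range k, f i}
  have hB (k : ℕ) : MeasurableSet (B k) :=
    measurableSet_lt measurable_const (Finset.measurable_sum _ fun i _ => measurable_pi_apply i)
  have hdecomp : {ω | τ < ∑ i ∈ Finset.range (N ω), X i ω}
      = ⋃ k, N ⁻¹' {k} ∩ (fun ω i => X i ω) ⁻¹' B k := by
    ext ω; simp [B]
  rw [hdecomp, measure_iUnion]
  · exact tsum_congr fun k =>
      hindep.measure_inter_preimage_eq_mul _ _ (measurableSet_singleton k) (hB k)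
  · exact fun k l hkl => Disjoint.mono inter_subset_left inter_subset_left
      ((disjoint_singleton.2 hkl).preimage N)
  · exact fun k => (hN (measurableSet_singleton k)).inter (measurable_pi_lambda _ hmeas (hB k))

theorem stmt_12_general
    {Ω : Type*} [MeasureSpace Ω] [IsProbabilityMeasure (ℙ : Measure Ω)]
    (T : ℕ → Ω → ℝ) (ν : Ω → ℕ) (Ta : Ω → ℝ) (b : ℝ) (hb : 0 < b)
    (hmeas : ∀ i, Measurable (T i)) (hνmeas : Measurable ν)
    (hindep : iIndepFun T ℙ)
    (hident : ∀ i j, IdentDistrib (T i) (T j) ℙ ℙ)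
    (hνT : IndepFun ν (fun ω i => T i ω) ℙ)
    (hν : ∀ k : ℕ, 1 ≤ k → (ℙ {ω | ν ω = k}).toReal = (1 / 2 : ℝ) ^ k)
    (hTa : ∀ ω, Ta ω = ∑ i ∈ Finset.range (ν ω), T (i + 1) ω)
    (htail : ∀ τ > 0, (ℙ {ω | τ < T 1 ω}).toReal ≤ Real.exp (-b * τ)) :
    ∀ τ > 0, (ℙ {ω | τ < Ta ω}).toReal ≤ Real.exp (-b * τ / 2) := by
  intro τ hτ
  have hmeas_succ (i : ℕ) : Measurable (T (i + 1)) := hmeas (i + 1)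
  have hTtail (i : ℕ) (t : ℝ) (ht : 0 < t) :
      Measure.map (T (i + 1)) ℙ (Ioi t) ≤ ENNReal.ofReal (Real.exp (-b * t)) := by
    rw [(hident (i + 1) 1).map_eq, Measure.map_apply (hmeas 1) measurableSet_Ioi,
      ENNReal.le_ofReal_iff_toReal_le (measure_ne_top _ _) (Real.exp_pos _).le]
    exact htail t ht
  have hterm (k : ℕ) : ℙ {ω | ν ω = k} * ℙ {ω | τ < ∑ i ∈ Finset.range k, T (i + 1) ω}
      ≤ 2⁻¹ ^ k * ENNReal.ofReal (erlangTail b k τ) := by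
    rcases Nat.eq_zero_or_pos k with rfl | hk
    · simp [hτ.not_gt]
    have hS := map_sum_range_Ioi_le_erlangTail hmeas_succ (hindep.precomp (add_left_injective 1))
      hb hTtail k hτ
    rw [Finset.sum_fn, Measure.map_apply (by fun_prop) measurableSet_Ioi] at hS
    rw [← ENNReal.ofReal_toReal (measure_ne_top ℙ {ω | ν ω = k}), hν k hk, one_div,
      ofReal_inv_two_pow]
    gcongr
    exact hS
  refine ENNReal.toReal_le_of_le_ofReal (Real.exp_pos _).le ?_
  rw [show {ω | τ < Ta ω} = {ω | τ < ∑ i ∈ Finset.range (ν ω), T (i + 1) ω} by simp [hTa],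
    measure_lt_sum_range_eq_tsum hmeas_succ hνmeas
      (hνT.comp measurable_id (measurable_pi_lambda _ fun i => measurable_pi_apply (i + 1))) τ,
    ← tsum_inv_two_pow_mul_erlangTail hb.le hτ.le]
  exact ENNReal.tsum_le_tsum hterm

/-- If `T̃_i` are i.i.d. nonnegative with `P(T̃_1 > τ) ≤ e^{-bτ}` for all
`τ > 0` (`b > 0`), and `ν` is an independent geometric variable with `P(ν = k) = 2^{-k}`,
then the geometric compound `T_a = Σ_{i=1}^{ν} T̃_i` satisfies `P(T_a > τ) ≤ e^{-bτ/2}`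
for all `τ > 0`. -/
theorem stmt_12
    {Ω : Type*} [MeasureSpace Ω] [IsProbabilityMeasure (ℙ : Measure Ω)]
    (T : ℕ → Ω → ℝ) (ν : Ω → ℕ) (Ta : Ω → ℝ) (b : ℝ) (hb : 0 < b)
    (hmeas : ∀ i, Measurable (T i)) (hνmeas : Measurable ν)
    (hindep : iIndepFun T ℙ)
    (hident : ∀ i j, IdentDistrib (T i) (T j) ℙ ℙ)
    (hnonneg : ∀ i ω, 0 ≤ T i ω)
    (hνT : IndepFun ν (fun ω i => T i ω) ℙ)
    (hν : ∀ k : ℕ, 1 ≤ k → (ℙ {ω | ν ω = k}).toReal = (1 / 2 : ℝ) ^ k)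
    (hTa : ∀ ω, Ta ω = ∑ i ∈ Finset.range (ν ω), T (i + 1) ω)
    (htail : ∀ τ > 0, (ℙ {ω | τ < T 1 ω}).toReal ≤ Real.exp (-b * τ)) :
    ∀ τ > 0, (ℙ {ω | τ < Ta ω}).toReal ≤ Real.exp (-b * τ / 2) :=
  stmt_12_general T ν Ta b hb hmeas hνmeas hindep hident hνT hν hTa htail
end
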